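/- arXiv:1801.03078 — 2 statements merged into one kernel-verified Lean document; each statement's English description precedes it below -/
import Mathlib

section
/- Let G ≠ {1} be a finitely generated, residually finite group, let F be a free group of rank rk(G) with basis 𝒳, and let π : F ↠ G be a surjective homomorphism with kernel R. If R ≠ {1} and r ∈ R ∖ {1} is an element of minimal word length (with respect to the basis 𝒳) among nontrivial elements of R, then there exists a subgroup F₁ of finite index in F with R ≤ F₁ such that r is a member of some basis of the (free) group F₁. -/
/-!
Write `r = a₀ ⋯ aₘ` as a reduced word with prefixes `wᵢ = a₀ ⋯ aᵢ₋₁`. Minimality of `r` forces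
the images of `w₀, …, wₘ` in `G` to be pairwise distinct (a coincidence `π wᵢ = π wⱼ` gives the
shorter relator `wᵢ⁻¹ wⱼ`), and `aₘ ≠ a₀⁻¹` (otherwise `a₀⁻¹ r a₀` is a shorter relator). By
residual finiteness the images stay distinct in a finite quotient `Q = G ⧸ N`, so in the Schreier
graph of `Q` the word `r` traces a closed path through `m + 1` distinct vertices. Its first `m`
edges extend to a spanning tree avoiding the last edge, and by Reidemeister–Schreier the kernel of
`F → Q` is free on the generators attached to the non-tree edges; that of the last edge is `r^{±1}`.
-/

/-- The rank of a subgroup `H` of `G`: the minimal cardinality of a subset of `G`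
generating `H`. -/
noncomputable def subgroupRank {G : Type*} [Group G] (H : Subgroup G) : ℕ :=
  sInf {n : ℕ | ∃ S : Finset G, S.card = n ∧ Subgroup.closure (S : Set G) = H}

open FreeGroup (of mk)
open Function Set

theorem subgroupRank_top_ne_zero (G : Type*) [Group G] [Group.FG G] [Nontrivial G] :
    subgroupRank (⊤ : Subgroup G) ≠ 0 := by
  rw [subgroupRank, Ne, Nat.sInf_eq_zero, not_or]
  refine ⟨?_, nonempty_iff_ne_empty.mp (Group.fg_iff'.mp ‹_›)⟩
  rintro ⟨S, hS, htop⟩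
  rw [Finset.card_eq_zero.mp hS, Finset.coe_empty, Subgroup.closure_empty] at htop
  exact bot_ne_top htop

theorem exists_normal_finiteIndex_injOn_quotient {G α : Type*} [Group G]
    (hres : ∀ g : G, g ≠ 1 → ∃ N : Subgroup G, N.Normal ∧ N.FiniteIndex ∧ g ∉ N)
    {s : Set α} (hs : s.Finite) {f : α → G} (hf : InjOn f s) :
    ∃ N : Subgroup G, N.Normal ∧ N.FiniteIndex ∧ InjOn (fun a => (f a : G ⧸ N)) s := by
  have hsep (g : G) : ∃ N : Subgroup G, N.Normal ∧ N.FiniteIndex ∧ (g ≠ 1 → g ∉ N) := by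
    by_cases hg : g = 1
    · exact ⟨⊤, inferInstance, inferInstance, fun h => absurd hg h⟩
    · obtain ⟨N, hN, hNf, hgN⟩ := hres g hg
      exact ⟨N, hN, hNf, fun _ => hgN⟩
  choose ν hν hνf hνg using hsep
  have : Finite ↥(s ×ˢ s) := (hs.prod hs).to_subtype
  refine ⟨⨅ p : ↥(s ×ˢ s), ν ((f p.1.1)⁻¹ * f p.1.2), Subgroup.normal_iInf_normal fun _ => hν _,
    Subgroup.finiteIndex_iInf fun _ => hνf _, fun a ha b hb hab => hf ha hb ?_⟩
  by_contra hne
  exact hνg _ (fun h => hne (inv_mul_eq_one.mp h))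
    (Subgroup.mem_iInf.mp (QuotientGroup.eq.mp hab) ⟨(a, b), ha, hb⟩)

theorem FreeGroupBasis.exists_apply_eq_inv {ι G : Type*} [Group G] (b : FreeGroupBasis ι G)
    (i : ι) : ∃ b' : FreeGroupBasis ι G, b' i = (b i)⁻¹ := by
  classical
  let σ : FreeGroup ι →* FreeGroup ι := FreeGroup.lift fun j => if j = i then (of j)⁻¹ else of j
  have hσ : σ.comp σ = .id _ := by ext j; by_cases hj : j = i <;> simp [σ, hj]
  refine ⟨.ofRepr (b.repr.trans (σ.toMulEquiv σ hσ hσ)), ?_⟩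
  show b.repr.symm (σ (of i)) = (b.repr.symm (of i))⁻¹
  simp [σ]

theorem FreeGroupBasis.exists_apply_eq_of_apply_eq_or_inv {ι G : Type*} [Finite ι] [Group G]
    (b : FreeGroupBasis ι G) (i : ι) {g : G} (h : b i = g ∨ b i = g⁻¹) :
    ∃ (ι' : Type) (b' : FreeGroupBasis ι' G) (i' : ι'), b' i' = g := by
  obtain ⟨b', hb'⟩ : ∃ b' : FreeGroupBasis ι G, b' i = g := by
    obtain h | h := h
    · exact ⟨b, h⟩
    · simpa [h] using b.exists_apply_eq_inv i
  obtain ⟨n, ⟨e⟩⟩ := Finite.exists_equiv_fin ι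
  exact ⟨Fin n, b'.reindex e, e i, by simpa using hb'⟩

namespace FreeGroup

variable {X : Type*}

@[simp] lemma mk_singleton_true (x : X) : mk [(x, true)] = of x := rfl

@[simp] lemma mk_singleton_false (x : X) : mk [(x, false)] = (of x)⁻¹ := rfl

lemma mk_singleton_flip (a : X × Bool) : mk [(a.1, !a.2)] = (mk [a])⁻¹ := by
  rw [inv_mk]
  rfl

lemma mk_take_add_one (L : List (X × Bool)) (d : X × Bool) {i : ℕ} (hi : i < L.length) :
    mk (L.take (i + 1)) = mk (L.take i) * mk [L.getD i d] := by
  rw [List.take_add_one, List.getElem?_eq_getElem hi, mul_mk,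
    List.getD_eq_getElem _ _ hi]
  rfl

variable [DecidableEq X]

lemma norm_mk_of_isReduced {L : List (X × Bool)} (h : IsReduced L) :
    (mk L).norm = L.length := by
  rw [norm, toWord_mk, h.reduce_eq]

lemma norm_inv_mk_take_mul_mk_take {L : List (X × Bool)} (hL : IsReduced L) {i j : ℕ}
    (hij : i ≤ j) (hj : j ≤ L.length) : ((mk (L.take i))⁻¹ * mk (L.take j)).norm = j - i := by
  have hsplit : L.take j = L.take i ++ (L.take j).drop i := by
    conv_lhs => rw [← List.take_append_drop i (L.take j)]
    rw [List.take_take, min_eq_left hij]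
  have hinfix : (L.take j).drop i <:+: L :=
    (List.drop_suffix _ _).isInfix.trans (List.take_prefix _ _).isInfix
  rw [hsplit, ← mul_mk, inv_mul_cancel_left, norm_mk_of_isReduced (hL.infix hinfix)]
  simp [hj]

end FreeGroup

namespace Schreier

variable {X Q : Type*}

open scoped Classical in
noncomputable def collapse (D : Set (Q × X)) : FreeGroup (Q × X) →* FreeGroup {d // d ∉ D} :=
  FreeGroup.lift fun d => if h : d ∈ D then 1 else of ⟨d, h⟩

@[simp] lemma collapse_of_mem {D : Set (Q × X)} {d : Q × X} (hd : d ∈ D) :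
    collapse D (of d) = 1 := by
  simp [collapse, hd]

@[simp] lemma collapse_of_notMem {D : Set (Q × X)} {d : Q × X} (hd : d ∉ D) :
    collapse D (of d) = of ⟨d, hd⟩ := by
  simp [collapse, hd]

lemma closure_le_ker_collapse (D : Set (Q × X)) :
    Subgroup.closure (of '' D) ≤ (collapse D).ker := by
  rw [Subgroup.closure_le]
  rintro _ ⟨d, hd, rfl⟩
  exact collapse_of_mem hd

variable [Group Q]

def act : Q →* MulAut (FreeGroup (Q × X)) where
  toFun q := FreeGroup.freeGroupCongr ((Equiv.mulLeft q).prodCongr (Equiv.refl X))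
  map_one' := MulEquiv.toMonoidHom_injective <| by ext; simp [FreeGroup.freeGroupCongr]
  map_mul' a b := MulEquiv.toMonoidHom_injective <| by
    ext
    simp [FreeGroup.freeGroupCongr, mul_assoc]
    rfl

@[simp] lemma act_of (q p : Q) (x : X) : act q (of (p, x)) = of (q * p, x) := by
  simp [act, FreeGroup.freeGroupCongr]

variable (φ : FreeGroup X →* Q)

/-- Reidemeister–Schreier rewriting, with `Q` acting on the edges by left translation: the left
component `rewrite φ w` is the product of the edges `(q, x)` (from `q` to `q * φ (of x)`) of the
Schreier graph of `φ` crossed by the path of `w` from `1`. -/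
noncomputable def rewriteHom : FreeGroup X →* FreeGroup (Q × X) ⋊[act] Q :=
  FreeGroup.lift fun x => ⟨of (1, x), φ (of x)⟩

@[simp] lemma rewriteHom_right (w : FreeGroup X) : (rewriteHom φ w).right = φ w := by
  have : SemidirectProduct.rightHom.comp (rewriteHom φ) = φ := by ext; simp [rewriteHom]
  exact DFunLike.congr_fun this w

noncomputable def rewrite (w : FreeGroup X) : FreeGroup (Q × X) := (rewriteHom φ w).left

@[simp] lemma rewrite_one : rewrite φ 1 = 1 := by simp [rewrite]

@[simp] lemma rewrite_of (x : X) : rewrite φ (of x) = of (1, x) := by simp [rewrite, rewriteHom]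

lemma rewrite_mul (u v : FreeGroup X) :
    rewrite φ (u * v) = rewrite φ u * act (φ u) (rewrite φ v) := by
  simp [rewrite]

lemma rewrite_inv (w : FreeGroup X) : rewrite φ w⁻¹ = act (φ w)⁻¹ (rewrite φ w)⁻¹ := by
  simp [rewrite]

variable (T : Q → FreeGroup X)

def schreierGen (d : Q × X) : FreeGroup X := T d.1 * of d.2 * (T (d.1 * φ (of d.2)))⁻¹

noncomputable def evalEdges : FreeGroup (Q × X) →* FreeGroup X := FreeGroup.lift (schreierGen φ T)

@[simp] lemma evalEdges_of (d : Q × X) : evalEdges φ T (of d) = schreierGen φ T d := by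
  simp [evalEdges]

theorem mul_eq_evalEdges_rewrite_mul (w : FreeGroup X) (q : Q) :
    T q * w = evalEdges φ T (act q (rewrite φ w)) * T (q * φ w) := by
  induction w using FreeGroup.induction_on generalizing q with
  | C1 => simp
  | of x => simp [schreierGen]
  | inv_of x ih =>
    have h := ih (q * (φ (of x))⁻¹)
    rw [inv_mul_cancel_right, ← eq_mul_inv_iff_mul_eq, mul_assoc] at h
    rw [rewrite_inv, map_inv φ, ← MulAut.mul_apply, ← map_mul act, map_inv, map_inv, h]
    group
  | mul u v ihu ihv =>
    rw [← mul_assoc, ihu, mul_assoc, ihv, rewrite_mul, map_mul φ, ← mul_assoc q, map_mul (act q),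
      ← MulAut.mul_apply, ← map_mul act, map_mul (evalEdges φ T), mul_assoc, mul_assoc]

variable {φ T}

lemma schreierGen_mem_ker (hT : ∀ q, φ (T q) = q) (d : Q × X) : schreierGen φ T d ∈ φ.ker := by
  simp [schreierGen, MonoidHom.mem_ker, hT]

lemma rewrite_schreierGen (hT : ∀ q, φ (T q) = q) (d : Q × X) :
    rewrite φ (schreierGen φ T d) =
      rewrite φ (T d.1) * of d * (rewrite φ (T (d.1 * φ (of d.2))))⁻¹ := by
  rw [schreierGen, rewrite_mul, rewrite_mul, rewrite_inv, map_mul φ, hT, hT, rewrite_of, act_of,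
    mul_one, ← MulAut.mul_apply, ← map_mul, mul_inv_cancel, map_one, MulAut.one_apply]

lemma evalEdges_rewrite (hT1 : T 1 = 1) {k : FreeGroup X} (hk : k ∈ φ.ker) :
    evalEdges φ T (rewrite φ k) = k := by
  simpa [hT1, MonoidHom.mem_ker.mp hk] using (mul_eq_evalEdges_rewrite_mul φ T k 1).symm

variable (φ) in
def IsEdgeIn (S : Set Q) (d : Q × X) : Prop := d.1 ∈ S ∧ d.1 * φ (of d.2) ∈ S

/-- A partial Schreier transversal on the vertex set `A`, with tree edges `D`: `T q` is a word
from `1` to `q` running along edges of `D`, and `T` is consistent along each edge of `D`. -/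
structure IsSchreierData (φ : FreeGroup X →* Q) (A : Set Q) (T : Q → FreeGroup X)
    (D : Set (Q × X)) : Prop where
  intro ::
  one_mem : (1 : Q) ∈ A
  apply_one : T 1 = 1
  map_apply : ∀ q ∈ A, φ (T q) = q
  rewrite_mem : ∀ q ∈ A, rewrite φ (T q) ∈ Subgroup.closure (of '' D)
  edge : ∀ d ∈ D, IsEdgeIn φ A d ∧ T d.1 * of d.2 = T (d.1 * φ (of d.2))

variable (φ) in
noncomputable def rewriteKer : φ.ker →* FreeGroup (Q × X) where
  toFun k := rewrite φ k
  map_one' := rewrite_one φ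
  map_mul' a b := by simp [rewrite_mul, MonoidHom.mem_ker.mp a.2]

namespace IsSchreierData

variable {D : Set (Q × X)} (h : IsSchreierData φ univ T D)

noncomputable def genHom : FreeGroup {d // d ∉ D} →* φ.ker :=
  FreeGroup.lift fun d =>
    ⟨schreierGen φ T d, schreierGen_mem_ker (fun q => h.map_apply q trivial) d⟩

lemma evalEdges_eq : evalEdges φ T = (φ.ker.subtype.comp h.genHom).comp (collapse D) := by
  ext d
  by_cases hd : d ∈ D
  · simp [hd, schreierGen, (h.edge d hd).2]
  · simp [hd, genHom]

lemma genHom_collapse_rewrite (k : φ.ker) : h.genHom (collapse D (rewrite φ k)) = k := by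
  have := evalEdges_rewrite h.apply_one k.2
  rw [h.evalEdges_eq] at this
  exact Subtype.ext this

lemma collapse_rewrite_genHom (d : {d // d ∉ D}) :
    collapse D (rewrite φ (h.genHom (of d))) = of d := by
  have hT : ∀ q, φ (T q) = q := fun q => h.map_apply q trivial
  have hc : ∀ q, collapse D (rewrite φ (T q)) = 1 :=
    fun q => closure_le_ker_collapse D (h.rewrite_mem q trivial)
  simp [genHom, rewrite_schreierGen hT, hc, d.2]

noncomputable def kerBasis : FreeGroupBasis {d // d ∉ D} φ.ker :=
  .ofRepr <| ((collapse D).comp (rewriteKer φ)).toMulEquiv h.genHom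
    (by ext k; exact congrArg Subtype.val (h.genHom_collapse_rewrite k))
    (by ext d; exact h.collapse_rewrite_genHom d)

lemma kerBasis_apply (d : {d // d ∉ D}) : (h.kerBasis d : FreeGroup X) = schreierGen φ T d := by
  show (h.genHom (of d) : FreeGroup X) = _
  simp [genHom]

end IsSchreierData

/-- The edge of the Schreier graph crossed when the letter `a` is read at the vertex `q`. -/
def edgeOf (φ : FreeGroup X →* Q) (q : Q) (a : X × Bool) : Q × X :=
  if a.2 then (q, a.1) else (q * φ (mk [a]), a.1)

lemma isEdgeIn_edgeOf {S : Set Q} {q : Q} {a : X × Bool} :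
    IsEdgeIn φ S (edgeOf φ q a) ↔ q ∈ S ∧ q * φ (mk [a]) ∈ S := by
  obtain ⟨x, _ | _⟩ := a <;> simp [edgeOf, IsEdgeIn, and_comm]

lemma edgeOf_eq_edgeOf {q q' : Q} {a a' : X × Bool} (h : edgeOf φ q a = edgeOf φ q' a') :
    (q = q' ∧ a = a') ∨ (q' = q * φ (mk [a]) ∧ a' = (a.1, !a.2)) := by
  obtain ⟨x, _ | _⟩ := a <;> obtain ⟨x', _ | _⟩ := a' <;>
    simp only [edgeOf, Prod.ext_iff] at h <;> obtain ⟨hq, rfl⟩ := h <;> simp_all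

lemma mul_of_edgeOf {q : Q} {a : X × Bool} (h : T (q * φ (mk [a])) = T q * mk [a]) :
    T (edgeOf φ q a).1 * of (edgeOf φ q a).2 =
      T ((edgeOf φ q a).1 * φ (of (edgeOf φ q a).2)) := by
  obtain ⟨x, _ | _⟩ := a <;> simp_all [edgeOf]

lemma act_rewrite_mem_zpowers (q : Q) (a : X × Bool) :
    act q (rewrite φ (mk [a])) ∈ Subgroup.zpowers (of (edgeOf φ q a)) := by
  obtain ⟨x, _ | _⟩ := a
  · have he : edgeOf φ q (x, false) = (q * (φ (of x))⁻¹, x) := by simp [edgeOf]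
    rw [he, FreeGroup.mk_singleton_false, rewrite_inv, rewrite_of, map_inv (act _), act_of,
      map_inv, act_of, mul_one]
    exact inv_mem (Subgroup.mem_zpowers _)
  · simp [edgeOf]

lemma schreierGen_edgeOf (q : Q) (a : X × Bool) :
    schreierGen φ T (edgeOf φ q a) = T q * mk [a] * (T (q * φ (mk [a])))⁻¹ ∨
      schreierGen φ T (edgeOf φ q a) = (T q * mk [a] * (T (q * φ (mk [a])))⁻¹)⁻¹ := by
  obtain ⟨x, _ | _⟩ := a
  · right; simp [edgeOf, schreierGen, mul_assoc]
  · left; simp [edgeOf, schreierGen]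

theorem exists_mul_mk_singleton_notMem (hφ : Surjective φ) {A : Set Q} (h1 : 1 ∈ A)
    (hA : A ≠ univ) : ∃ q ∈ A, ∃ a : X × Bool, q * φ (mk [a]) ∉ A := by
  by_contra! hclosed
  have hword : ∀ L : List (X × Bool), ∀ q ∈ A, q * φ (mk L) ∈ A := by
    intro L
    induction L with
    | nil => simp [← FreeGroup.one_eq_mk]
    | cons a L ih =>
      intro q hq
      rw [← List.singleton_append, ← FreeGroup.mul_mk, map_mul, ← mul_assoc]
      exact ih _ (hclosed q hq a)
  refine hA (eq_univ_of_forall fun g => ?_)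
  classical
  obtain ⟨w, rfl⟩ := hφ g
  simpa [FreeGroup.mk_toWord] using hword w.toWord 1 h1

variable {A : Set Q} {D : Set (Q × X)}

theorem IsSchreierData.insert_edgeOf [DecidableEq Q] (h : IsSchreierData φ A T D) {q : Q}
    (hq : q ∈ A) (a : X × Bool) (hv : q * φ (mk [a]) ∉ A) :
    IsSchreierData φ (insert (q * φ (mk [a])) A) (update T (q * φ (mk [a])) (T q * mk [a]))
      (insert (edgeOf φ q a) D) where
  one_mem := mem_insert_of_mem _ h.one_mem
  apply_one := by rw [update_of_ne (ne_of_mem_of_not_mem h.one_mem hv), h.apply_one]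
  map_apply := by
    rintro p (rfl | hp)
    · simp [h.map_apply q hq]
    · rw [update_of_ne (ne_of_mem_of_not_mem hp hv), h.map_apply p hp]
  rewrite_mem := by
    have hmono : Subgroup.closure (of '' D) ≤ Subgroup.closure (of '' insert (edgeOf φ q a) D) :=
      Subgroup.closure_mono (image_mono (subset_insert _ _))
    rintro p (rfl | hp)
    · rw [update_self, rewrite_mul, h.map_apply q hq]
      have hedge : of (edgeOf φ q a) ∈ Subgroup.closure (of '' insert (edgeOf φ q a) D) :=
        Subgroup.subset_closure (mem_image_of_mem _ (mem_insert _ _))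
      exact mul_mem (hmono (h.rewrite_mem q hq))
        (Subgroup.zpowers_le.mpr hedge (act_rewrite_mem_zpowers q a))
    · rw [update_of_ne (ne_of_mem_of_not_mem hp hv)]
      exact hmono (h.rewrite_mem p hp)
  edge := by
    rintro d (rfl | hd)
    · refine ⟨isEdgeIn_edgeOf.mpr ⟨mem_insert_of_mem _ hq, mem_insert _ _⟩, mul_of_edgeOf ?_⟩
      rw [update_self, update_of_ne (ne_of_mem_of_not_mem hq hv)]
    · obtain ⟨⟨h1, h2⟩, h3⟩ := h.edge d hd
      refine ⟨⟨mem_insert_of_mem _ h1, mem_insert_of_mem _ h2⟩, ?_⟩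
      rw [update_of_ne (ne_of_mem_of_not_mem h1 hv), update_of_ne (ne_of_mem_of_not_mem h2 hv),
        h3]

theorem IsSchreierData.exists_extend [Finite Q] (hφ : Surjective φ)
    (h : IsSchreierData φ A T D) :
    ∃ T' D', IsSchreierData φ univ T' D' ∧ EqOn T' T A ∧ ∀ d ∈ D', IsEdgeIn φ A d → d ∈ D := by
  induction hn : Aᶜ.ncard using Nat.strong_induction_on generalizing A T D with
  | _ n ih =>
  classical
  by_cases hA : A = univ
  · subst hA
    exact ⟨T, D, h, eqOn_refl _ _, fun d hd _ => hd⟩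
  obtain ⟨q, hq, a, hv⟩ := exists_mul_mk_singleton_notMem hφ h.one_mem hA
  have hlt : (insert (q * φ (mk [a])) A)ᶜ.ncard < n :=
    hn ▸ ncard_lt_ncard (compl_lt_compl_iff_lt.mpr (ssubset_insert hv))
  obtain ⟨T', D', h', hT', hD'⟩ := ih _ hlt (h.insert_edgeOf hq a hv) rfl
  refine ⟨T', D', h', fun p hp => ?_, fun d hd hdA => ?_⟩
  · rw [hT' (mem_insert_of_mem _ hp), update_of_ne (ne_of_mem_of_not_mem hp hv)]
  · obtain rfl | hd := hD' d hd ⟨mem_insert_of_mem _ hdA.1, mem_insert_of_mem _ hdA.2⟩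
    · exact absurd (isEdgeIn_edgeOf.mp hdA).2 hv
    · exact hd

theorem exists_isSchreierData_path (w : ℕ → FreeGroup X) (a : ℕ → X × Bool) (h0 : w 0 = 1)
    (m : ℕ) (hsucc : ∀ i < m, w (i + 1) = w i * mk [a i])
    (hinj : InjOn (fun i => φ (w i)) (Iic m)) :
    ∃ T D, IsSchreierData φ ((fun i => φ (w i)) '' Iic m) T D ∧ (∀ i ≤ m, T (φ (w i)) = w i) ∧
      ∀ d ∈ D, ∃ i < m, d = edgeOf φ (φ (w i)) (a i) := by
  classical
  induction m with
  | zero =>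
    refine ⟨fun _ => 1, ∅, .intro ?_ rfl ?_ (by simp) (by simp), ?_, by simp⟩ <;> simp [h0]
  | succ m ih =>
    obtain ⟨T, D, h, hT, hD⟩ :=
      ih (fun i hi => hsucc i (by omega)) (hinj.mono (Iic_subset_Iic.mpr m.le_succ))
    have hw : φ (w (m + 1)) = φ (w m) * φ (mk [a m]) := by rw [hsucc m m.lt_succ_self, map_mul]
    have hv : φ (w (m + 1)) ∉ (fun i => φ (w i)) '' Iic m := by
      rintro ⟨i, hi, he⟩
      have := hinj (show i ≤ m + 1 by simp at hi; omega) (show m + 1 ≤ m + 1 from le_rfl) he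
      simp at hi; omega
    have himage : (fun i => φ (w i)) '' Iic (m + 1) =
        insert (φ (w (m + 1))) ((fun i => φ (w i)) '' Iic m) := by
      have : Iic (m + 1) = insert (m + 1) (Iic m) := by
        ext i
        simp only [mem_Iic, mem_insert_iff]
        omega
      rw [this, image_insert_eq]
    rw [hw] at hv himage
    refine ⟨_, _, himage ▸ h.insert_edgeOf (mem_image_of_mem _ (mem_Iic.mpr le_rfl)) (a m) hv,
      fun i hi => ?_, fun d hd => ?_⟩
    · obtain hi | rfl := Nat.le_succ_iff.mp hi
      · have hwi : φ (w i) ∈ (fun i => φ (w i)) '' Iic m := mem_image_of_mem _ (mem_Iic.mpr hi)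
        rw [update_of_ne (ne_of_mem_of_not_mem hwi hv), hT i hi]
      · rw [hw, update_self, hT m le_rfl, hsucc m m.lt_succ_self]
    · obtain rfl | hd := hd
      · exact ⟨m, m.lt_succ_self, rfl⟩
      · obtain ⟨i, hi, rfl⟩ := hD d hd
        exact ⟨i, by omega, rfl⟩

theorem exists_basis_ker_of_loop [Finite Q] [Finite X] (hφ : Surjective φ)
    (w : ℕ → FreeGroup X) (a : ℕ → X × Bool) (h0 : w 0 = 1) (m : ℕ)
    (hsucc : ∀ i ≤ m, w (i + 1) = w i * mk [a i]) (hclosed : φ (w (m + 1)) = 1)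
    (hinj : InjOn (fun i => φ (w i)) (Iic m)) (hcyc : 0 < m → a 0 ≠ ((a m).1, !(a m).2)) :
    ∃ (ι : Type) (b : FreeGroupBasis ι φ.ker) (i : ι), (b i : FreeGroup X) = w (m + 1) := by
  obtain ⟨T₀, D₀, h₀, hT₀, hD₀⟩ :=
    exists_isSchreierData_path w a h0 m (fun i hi => hsucc i hi.le) hinj
  have hlast : φ (w m) * φ (mk [a m]) = φ (w 0) := by
    rw [← map_mul, ← hsucc m le_rfl, hclosed, h0, map_one]
  set c := edgeOf φ (φ (w m)) (a m)
  have hcA : IsEdgeIn φ ((fun i => φ (w i)) '' Iic m) c :=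
    isEdgeIn_edgeOf.mpr ⟨mem_image_of_mem _ (mem_Iic.mpr le_rfl),
      hlast ▸ mem_image_of_mem _ (mem_Iic.mpr m.zero_le)⟩
  -- An earlier edge crossed in the same direction would start at the vertex of `w m`; crossed
  -- backwards, it must be the first edge with `a 0` the inverse of `a m`.
  have hcD₀ : c ∉ D₀ := by
    intro hc
    obtain ⟨i, hi, hci⟩ := hD₀ c hc
    obtain ⟨he, -⟩ | ⟨he, ha⟩ := edgeOf_eq_edgeOf hci
    · exact hi.ne' (hinj (mem_Iic.mpr le_rfl) (mem_Iic.mpr hi.le) he)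
    · obtain rfl : i = 0 := hinj (mem_Iic.mpr hi.le) (mem_Iic.mpr m.zero_le) (he.trans hlast)
      exact hcyc hi ha
  obtain ⟨T, D, h, hT, hD⟩ := h₀.exists_extend hφ
  have hcD : c ∉ D := fun hc => hcD₀ (hD c hc hcA)
  have hgen := schreierGen_edgeOf (φ := φ) (T := T) (φ (w m)) (a m)
  rw [hT (mem_image_of_mem _ (mem_Iic.mpr le_rfl)), hT₀ m le_rfl, hlast, h0, map_one, h.apply_one,
    inv_one, mul_one, ← hsucc m le_rfl, ← h.kerBasis_apply ⟨c, hcD⟩] at hgen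
  have hker : w (m + 1) ∈ φ.ker := hclosed
  obtain ⟨ι, b, i, hb⟩ := h.kerBasis.exists_apply_eq_of_apply_eq_or_inv ⟨c, hcD⟩
    (g := ⟨w (m + 1), hker⟩) (by simpa only [Subtype.ext_iff, Subgroup.coe_inv] using hgen)
  exact ⟨ι, b, i, congrArg Subtype.val hb⟩

end Schreier

section MinimalRelator

variable {X G : Type*} [DecidableEq X] [Group G] {π : FreeGroup X →* G} {r : FreeGroup X}

theorem injOn_mk_take_of_minimal (hmin : ∀ s ∈ π.ker, s ≠ 1 → r.norm ≤ s.norm) :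
    InjOn (fun i => π (mk (r.toWord.take i))) (Iio r.norm) := by
  have hlt {i j : ℕ} (hij : i < j) (hj : j < r.norm)
      (he : π (mk (r.toWord.take i)) = π (mk (r.toWord.take j))) : False := by
    have hnorm := FreeGroup.norm_inv_mk_take_mul_mk_take FreeGroup.isReduced_toWord hij.le hj.le
    have hker : (mk (r.toWord.take i))⁻¹ * mk (r.toWord.take j) ∈ π.ker := by
      rw [MonoidHom.mem_ker, map_mul, map_inv, he, inv_mul_cancel]
    have := hmin _ hker (fun h => by rw [h, FreeGroup.norm_one] at hnorm; omega)
    omega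
  intro i hi j hj he
  by_contra hne
  obtain h | h := lt_or_gt_of_ne hne
  · exact hlt h hj he
  · exact hlt h hi he.symm

theorem getD_zero_ne_of_minimal (hr : r ∈ π.ker) (hr1 : r ≠ 1)
    (hmin : ∀ s ∈ π.ker, s ≠ 1 → r.norm ≤ s.norm) {m : ℕ} (hm : r.norm = m + 1) (hm0 : 0 < m)
    (d : X × Bool) : r.toWord.getD 0 d ≠ ((r.toWord.getD m d).1, !(r.toWord.getD m d).2) := by
  intro ha
  have hlen : r.toWord.length = m + 1 := hm
  set u := mk [r.toWord.getD m d]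
  have hfirst : mk (r.toWord.take 1) = u⁻¹ := by
    rw [FreeGroup.mk_take_add_one _ d (by omega), List.take_zero, ← FreeGroup.one_eq_mk, one_mul,
      ha, FreeGroup.mk_singleton_flip]
  have hlast : r = mk (r.toWord.take m) * u := by
    rw [← FreeGroup.mk_take_add_one _ d (by omega), ← hlen, List.take_length, FreeGroup.mk_toWord]
  have hs : (mk (r.toWord.take 1))⁻¹ * mk (r.toWord.take m) = u * r * u⁻¹ := by
    rw [hfirst]
    conv_rhs => rw [hlast]
    group
  have hnorm := FreeGroup.norm_inv_mk_take_mul_mk_take FreeGroup.isReduced_toWord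
    (show 1 ≤ m by omega) (show m ≤ r.toWord.length by omega)
  rw [hs] at hnorm
  have := hmin _ (π.normal_ker.conj_mem r hr u) (fun h => hr1 (by rwa [conj_eq_one_iff] at h))
  omega

end MinimalRelator

theorem minimal_relator_primitive_in_finite_index_subgroup_general
    {G : Type*} [Group G] [Group.FG G] [Nontrivial G]
    (hres : ∀ g : G, g ≠ 1 → ∃ N : Subgroup G, N.Normal ∧ N.FiniteIndex ∧ g ∉ N)
    (X : Type*) [DecidableEq X] (hX : Nat.card X = subgroupRank (⊤ : Subgroup G))
    (π : FreeGroup X →* G) (hπ : Function.Surjective π)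
    (r : FreeGroup X) (hrR : r ∈ π.ker) (hr1 : r ≠ 1)
    (hmin : ∀ s ∈ π.ker, s ≠ 1 → FreeGroup.norm r ≤ FreeGroup.norm s) :
    ∃ F₁ : Subgroup (FreeGroup X), F₁.FiniteIndex ∧ π.ker ≤ F₁ ∧
      ∃ (ι : Type) (b : FreeGroupBasis ι F₁) (i : ι), (b i : FreeGroup X) = r := by
  obtain ⟨⟨x⟩, _⟩ := Nat.card_ne_zero.mp (hX ▸ subgroupRank_top_ne_zero G)
  obtain ⟨m, hm⟩ :=
    Nat.exists_eq_add_one.mpr (Nat.pos_of_ne_zero (mt FreeGroup.norm_eq_zero.mp hr1))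
  set w := fun i => mk (r.toWord.take i)
  have hw : w (m + 1) = r := by simp [w, ← hm, FreeGroup.norm, FreeGroup.mk_toWord]
  have hinj : InjOn (fun i => π (w i)) (Iic m) := by
    simpa [hm, Iio_add_one_eq_Iic] using injOn_mk_take_of_minimal hmin
  obtain ⟨N, _, _, hNinj⟩ := exists_normal_finiteIndex_injOn_quotient hres (finite_Iic m) hinj
  obtain ⟨ι, b, i, hb⟩ := Schreier.exists_basis_ker_of_loop (φ := (QuotientGroup.mk' N).comp π)
    ((QuotientGroup.mk'_surjective N).comp hπ) w (fun i => r.toWord.getD i (x, true))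
    (by simp [w, ← FreeGroup.one_eq_mk]) m
    (fun i hi => FreeGroup.mk_take_add_one _ _ (by simp [FreeGroup.norm] at hm; omega))
    (by simp [hw, MonoidHom.mem_ker.mp hrR]) hNinj (getD_zero_ne_of_minimal hrR hr1 hmin hm · _)
  refine ⟨_, inferInstance, fun k hk => ?_, ι, b, i, hb.trans hw⟩
  simp [MonoidHom.mem_ker.mp hk]

/-- Let `G ≠ 1` be a finitely generated residually finite group, `F` the free group on a
basis `X` of cardinality `rk G`, and `π : F ↠ G` with kernel `R ≠ 1`.  If `r` is a
nontrivial element of `R` of minimal word length, then `r` belongs to a basis of a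
finite-index subgroup `F₁` of `F` containing `R`. -/
theorem minimal_relator_primitive_in_finite_index_subgroup
    {G : Type*} [Group G] [Group.FG G] [Nontrivial G]
    (hres : ∀ g : G, g ≠ 1 → ∃ N : Subgroup G, N.Normal ∧ N.FiniteIndex ∧ g ∉ N)
    (X : Type*) [DecidableEq X] (hX : Nat.card X = subgroupRank (⊤ : Subgroup G))
    (π : FreeGroup X →* G) (hπ : Function.Surjective π)
    (hker : π.ker ≠ ⊥)
    (r : FreeGroup X) (hrR : r ∈ π.ker) (hr1 : r ≠ 1)
    (hmin : ∀ s ∈ π.ker, s ≠ 1 → FreeGroup.norm r ≤ FreeGroup.norm s) :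
    ∃ F₁ : Subgroup (FreeGroup X), F₁.FiniteIndex ∧ π.ker ≤ F₁ ∧
      ∃ (ι : Type) (b : FreeGroupBasis ι F₁) (i : ι), (b i : FreeGroup X) = r :=
  minimal_relator_primitive_in_finite_index_subgroup_general hres X hX π hπ r hrR hr1 hmin
end

section
/- Let G be a finitely generated, residually finite group that is not free. Then the function rk − 1 is not multiplicative on G: there exists a normal subgroup G₁ of finite index in G with rk(G₁) − 1 < [G : G₁] · (rk(G) − 1); in fact there exists such a G₁ generated by at most (rk(G) − 1) · [G : G₁] elements. -/
open Subgroup QuotientGroup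

theorem subgroupRank_le_card {G : Type*} [Group G] {H : Subgroup G} {T : Finset G}
    (hT : closure (T : Set G) = H) : subgroupRank H ≤ T.card := by
  unfold subgroupRank
  exact Nat.sInf_le ⟨T, rfl, hT⟩

theorem exists_finset_card_eq_subgroupRank {G : Type*} [Group G] {H : Subgroup G} (hH : H.FG) :
    ∃ S : Finset G, S.card = subgroupRank H ∧ closure (S : Set G) = H := by
  obtain ⟨S, hS⟩ := hH
  exact Nat.sInf_mem (s := {n | ∃ S : Finset G, S.card = n ∧ closure (S : Set G) = H})
    ⟨S.card, S, rfl, hS⟩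

section CayleyEdges

variable {G : Type*} [Group G] [DecidableEq G]

/-- The pair `(r, s)` stands for the edge from `r` to `r * s` of the Cayley graph of `(G, S)`. -/
def cayleyEdges (S R : Finset G) : Finset (G × G) :=
  (R ×ˢ S).filter fun p => p.1 * p.2 ∈ R

theorem mem_cayleyEdges {S R : Finset G} {p : G × G} :
    p ∈ cayleyEdges S R ↔ p.1 ∈ R ∧ p.2 ∈ S ∧ p.1 * p.2 ∈ R := by
  simp [cayleyEdges, and_assoc]

theorem cayleyEdges_mono {S R R' : Finset G} (h : R ⊆ R') :
    cayleyEdges S R ⊆ cayleyEdges S R' := fun _ hp => by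
  rw [mem_cayleyEdges] at hp ⊢
  exact ⟨h hp.1, hp.2.1, h hp.2.2⟩

end CayleyEdges

namespace Subgroup

variable {G : Type*} [Group G] {H : Subgroup G}

theorem IsComplement.toRightFun_eq_self {T : Set G} (hT : IsComplement (H : Set G) T) {t : G}
    (ht : t ∈ T) : (hT.toRightFun t : G) = t := by
  have : hT.rightQuotientEquiv (Quotient.mk'' t) = ⟨t, ht⟩ := by
    rw [← Equiv.eq_symm_apply]; rfl
  exact congrArg Subtype.val this

theorem rightRel_mk_mul_right {g g' : G} (h : Quotient.mk (rightRel H) g = Quotient.mk _ g')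
    (y : G) : Quotient.mk (rightRel H) (g * y) = Quotient.mk _ (g' * y) := by
  rw [Quotient.eq, rightRel_apply] at h ⊢
  simpa [mul_assoc] using h

theorem card_le_index_of_injOn [H.FiniteIndex] {R : Finset G}
    (hR : Set.InjOn (Quotient.mk (rightRel H)) R) : R.card ≤ H.index := by
  have : Finite (Quotient (rightRel H)) := .of_equiv _ (quotientRightRelEquivQuotientLeftRel H).symm
  have := Nat.card_le_card_of_injective _ (Set.injOn_iff_injective.mp hR)
  rwa [Nat.card_coe_set_eq, Set.ncard_coe_finset,
    Nat.card_congr (quotientRightRelEquivQuotientLeftRel H), ← index_eq_card] at this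

theorem isComplement_of_injOn {R : Set G} (hinj : Set.InjOn (Quotient.mk (rightRel H)) R)
    (hsurj : ∀ g, ∃ r ∈ R, Quotient.mk (rightRel H) r = Quotient.mk _ g) :
    IsComplement (H : Set G) R := by
  rw [isComplement_subgroup_left_iff_bijective]
  refine ⟨Set.injOn_iff_injective.mp hinj, fun q => ?_⟩
  obtain ⟨g, rfl⟩ := Quotient.exists_rep q
  obtain ⟨r, hr, hrg⟩ := hsurj g
  exact ⟨⟨r, hr⟩, hrg⟩

/-- Since `S` generates `G`, a set of right cosets that contains `H` and is closed under the
neighbours in the Schreier graph contains every right coset. -/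
theorem exists_adjacent_notMem_cosets {S R : Set G} (hS : closure S = ⊤) (h1 : (1 : G) ∈ R)
    (hR : ∃ g : G, ∀ r ∈ R, Quotient.mk (rightRel H) r ≠ Quotient.mk _ g) :
    ∃ r ∈ R, ∃ s ∈ S, ∃ x : G, (x = r * s ∨ x * s = r) ∧
      ∀ r' ∈ R, Quotient.mk (rightRel H) r' ≠ Quotient.mk _ x := by
  by_contra! hcon
  obtain ⟨g, hg⟩ := hR
  suffices hall : ∀ g : G, ∃ r ∈ R, Quotient.mk (rightRel H) r = Quotient.mk _ g by
    obtain ⟨r, hr, hrg⟩ := hall g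
    exact hg r hr hrg
  intro g
  induction (hS ▸ mem_top g : g ∈ closure S) using closure_induction_right with
  | one => exact ⟨1, h1, rfl⟩
  | mul_right g _ s hs ih =>
    obtain ⟨r, hr, hrg⟩ := ih
    obtain ⟨r', hr', hr'x⟩ := hcon r hr s hs (r * s) (Or.inl rfl)
    exact ⟨r', hr', hr'x.trans (rightRel_mk_mul_right hrg s)⟩
  | mul_inv_cancel g _ s hs ih =>
    obtain ⟨r, hr, hrg⟩ := ih
    obtain ⟨r', hr', hr'x⟩ := hcon r hr s hs (r * s⁻¹) (Or.inr (inv_mul_cancel_right r s))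
    exact ⟨r', hr', hr'x.trans (rightRel_mk_mul_right hrg s⁻¹)⟩

variable [DecidableEq G]

/-- Schreier's lemma, counting only the nontrivial Schreier generators: those of the edges
`(r, s)` with `r * s ∈ R` are `1`. -/
theorem exists_finset_card_add_card_cayleyEdges_le {R S : Finset G}
    (hR : IsComplement (H : Set G) R) (hR1 : (1 : G) ∈ R) (hS : closure (S : Set G) = ⊤) :
    ∃ T : Finset G, T.card + (cayleyEdges S R).card ≤ R.card * S.card ∧
      closure (T : Set G) = H := by
  set f : G → G := fun g => g * (hR.toRightFun g : G)⁻¹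
  refine ⟨((R ×ˢ S).filter fun p => p.1 * p.2 ∉ R).image fun p => f (p.1 * p.2), ?_, ?_⟩
  · calc _ ≤ ((R ×ˢ S).filter fun p => p.1 * p.2 ∉ R).card + (cayleyEdges S R).card :=
          Nat.add_le_add_right Finset.card_image_le _
      _ = R.card * S.card := by
        rw [cayleyEdges, add_comm, Finset.card_filter_add_card_filter_not, Finset.card_product]
  · refine le_antisymm ?_ ?_
    · rw [closure_le, Finset.coe_image]
      rintro - ⟨p, -, rfl⟩
      exact hR.mul_inv_toRightFun_mem _
    · rw [← closure_mul_image_eq hR hR1 hS, closure_le]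
      rintro - ⟨-, ⟨r, hr, s, hs, rfl⟩, rfl⟩
      by_cases hrs : r * s ∈ R
      · simp [f, hR.toRightFun_eq_self hrs]
      · exact subset_closure (Finset.mem_image.2
          ⟨(r, s), Finset.mem_filter.2 ⟨Finset.mem_product.2 ⟨hr, hs⟩, hrs⟩, rfl⟩)

/-- Adding a vertex in a new coset along a Cayley edge adds that edge, so the surplus of edges
over vertices never drops. -/
theorem exists_isComplement_superset [H.FiniteIndex] {S : Finset G}
    (hS : closure (S : Set G) = ⊤) (R : Finset G) (h1 : (1 : G) ∈ R)
    (hinj : Set.InjOn (Quotient.mk (rightRel H)) R) (hcard : R.card ≤ (cayleyEdges S R).card) :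
    ∃ R' : Finset G, R ⊆ R' ∧ IsComplement (H : Set G) R' ∧
      R'.card ≤ (cayleyEdges S R').card := by
  by_cases hsurj : ∀ g, ∃ r ∈ R, Quotient.mk (rightRel H) r = Quotient.mk _ g
  · exact ⟨R, subset_rfl, isComplement_of_injOn hinj hsurj, hcard⟩
  push Not at hsurj
  obtain ⟨r, hr, s, hs, x, hrx, hx⟩ := exists_adjacent_notMem_cosets hS h1 hsurj
  have hxR : x ∉ R := fun hxR => hx x hxR rfl
  have hinj' : Set.InjOn (Quotient.mk (rightRel H)) (insert x R : Finset G) := by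
    rw [Finset.coe_insert, Set.injOn_insert (Finset.mem_coe.not.2 hxR)]
    exact ⟨hinj, fun ⟨r', hr', hr'x⟩ => hx r' hr' hr'x⟩
  have hedge : ∃ p ∈ cayleyEdges S (insert x R), p ∉ cayleyEdges S R := by
    rcases hrx with rfl | hxs
    · exact ⟨(r, s), mem_cayleyEdges.2 ⟨Finset.mem_insert_of_mem hr, hs,
        Finset.mem_insert_self _ _⟩, fun h => hxR (mem_cayleyEdges.1 h).2.2⟩
    · exact ⟨(x, s), mem_cayleyEdges.2 ⟨Finset.mem_insert_self _ _, hs,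
        hxs ▸ Finset.mem_insert_of_mem hr⟩, fun h => hxR (mem_cayleyEdges.1 h).1⟩
  have hlt : (cayleyEdges S R).card < (cayleyEdges S (insert x R)).card :=
    Finset.card_lt_card ((Finset.ssubset_iff_of_subset
      (cayleyEdges_mono (Finset.subset_insert x R))).2 hedge)
  have hidx := card_le_index_of_injOn hinj'
  obtain ⟨R', hsub, hR', hcard'⟩ := exists_isComplement_superset hS (insert x R)
    (Finset.mem_insert_of_mem h1) hinj' (by rw [Finset.card_insert_of_notMem hxR]; omega)
  exact ⟨R', (Finset.subset_insert x R).trans hsub, hR', hcard'⟩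
termination_by H.index - R.card
decreasing_by rw [Finset.card_insert_of_notMem hxR] at hidx ⊢; omega

theorem exists_finset_card_add_index_le_card_mul_index [H.FiniteIndex] {S R : Finset G}
    (hS : closure (S : Set G) = ⊤) (h1 : (1 : G) ∈ R)
    (hinj : Set.InjOn (Quotient.mk (rightRel H)) R) (hcard : R.card ≤ (cayleyEdges S R).card) :
    ∃ T : Finset G, T.card + H.index ≤ S.card * H.index ∧ closure (T : Set G) = H := by
  obtain ⟨R', hRR', hR', hcard'⟩ := exists_isComplement_superset hS R h1 hinj hcard
  obtain ⟨T, hT, hTH⟩ := exists_finset_card_add_card_cayleyEdges_le hR' (hRR' h1) hS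
  have hindex : R'.card = H.index := by
    rw [← hR'.card_right, Nat.card_coe_set_eq, Set.ncard_coe_finset]
  refine ⟨T, ?_, hTH⟩
  rw [← hindex, mul_comm]
  omega

end Subgroup

namespace FreeGroup

variable {α G : Type*} [Group G]

def IsShortestRelator (φ : FreeGroup α →* G) (L : List (α × Bool)) : Prop :=
  IsReduced L ∧ L ≠ [] ∧ φ (mk L) = 1 ∧
    ∀ M : List (α × Bool), IsReduced M → M ≠ [] → φ (mk M) = 1 → L.length ≤ M.length

theorem exists_isShortestRelator {φ : FreeGroup α →* G} (hφ : ¬ Function.Injective φ) :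
    ∃ L, IsShortestRelator φ L := by
  classical
  obtain ⟨w, hw, hw1⟩ : ∃ w, φ w = 1 ∧ w ≠ 1 := by
    simpa [injective_iff_map_eq_one] using hφ
  have hex : ∃ n, ∃ M : List (α × Bool),
      IsReduced M ∧ M ≠ [] ∧ φ (mk M) = 1 ∧ M.length = n :=
    ⟨_, w.toWord, isReduced_toWord, toWord_eq_nil_iff.not.2 hw1, by rwa [mk_toWord], rfl⟩
  obtain ⟨L, hL, hLne, hL1, hLlen⟩ := Nat.find_spec hex
  exact ⟨L, hL, hLne, hL1, fun M hM hMne hM1 =>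
    hLlen ▸ Nat.find_min' hex ⟨M, hM, hMne, hM1, rfl⟩⟩

/-- The segment of a shortest relator between two prefixes with the same image is a relator. -/
theorem IsShortestRelator.eq_of_map_mk_take_eq {φ : FreeGroup α →* G} {L : List (α × Bool)}
    (hL : IsShortestRelator φ L) {i j : ℕ} (hij : i < j) (hj : j ≤ L.length)
    (h : φ (mk (L.take i)) = φ (mk (L.take j))) : i = 0 ∧ j = L.length := by
  set M := (L.take j).drop i
  have hsplit : L.take i ++ M = L.take j := by
    simpa [List.take_take, min_eq_left hij.le] using List.take_append_drop i (L.take j)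
  have hMlen : M.length = j - i := by simp [M, min_eq_left hj]
  have hM : IsReduced M :=
    hL.1.infix ⟨L.take i, L.drop j, by rw [hsplit, List.take_append_drop]⟩
  have hM1 : φ (mk M) = 1 := by
    rwa [← hsplit, ← mul_mk, _root_.map_mul, left_eq_mul] at h
  have := hL.2.2.2 M hM (List.ne_nil_of_length_pos (by omega)) hM1
  omega

theorem lift_mk_take_succ (f : α → G) (L : List (α × Bool)) {i : ℕ} (hi : i < L.length) :
    lift f (mk (L.take (i + 1))) =
      lift f (mk (L.take i)) * cond L[i].2 (f L[i].1) (f L[i].1)⁻¹ := by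
  rw [← List.take_concat_get' L i hi, ← mul_mk, _root_.map_mul]
  simp

/-- The `i`-th letter of `L` runs along this Cayley edge, between the images of the prefixes of
lengths `i` and `i + 1`. -/
def letterEdge (f : α → G) (L : List (α × Bool)) (i : Fin L.length) : G × G :=
  (cond L[i].2 (lift f (mk (L.take i))) (lift f (mk (L.take (i + 1)))), f L[i].1)

theorem IsShortestRelator.letterEdge_injective {f : α → G} {L : List (α × Bool)}
    (hL : IsShortestRelator (lift f) L) (hf : Function.Injective f) :
    Function.Injective (letterEdge f L) := by
  refine .of_lt_imp_ne ?_
  rintro ⟨i, hi⟩ ⟨j, hj⟩ (hij : i < j) heq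
  simp only [letterEdge, Fin.getElem_fin, Prod.mk.injEq] at heq
  obtain ⟨hsrc, hs⟩ := heq
  -- opposite orientations force equal prefixes of lengths `i + 1` and `j`, hence `j = i + 1`
  -- and a cancelling pair of letters
  have hmixed : L[i].2 ≠ L[j].2 →
      lift f (mk (L.take (i + 1))) = lift f (mk (L.take j)) → False := by
    intro hb hq
    rcases (Nat.succ_le_of_lt hij).lt_or_eq with hlt | rfl
    · exact absurd (hL.eq_of_map_mk_take_eq hlt hj.le hq).1 (Nat.succ_ne_zero i)
    · exact hb (List.isChain_iff_getElem.1 hL.1 i hj (hf hs))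
  rcases hbi : L[i].2 <;> rcases hbj : L[j].2 <;>
    simp only [hbi, hbj, cond_true, cond_false] at hsrc
  · exact absurd (hL.eq_of_map_mk_take_eq (by omega) hj hsrc).1 (Nat.succ_ne_zero i)
  · exact hmixed (by simp [hbi, hbj]) hsrc
  · refine hmixed (by simp [hbi, hbj]) ?_
    rw [lift_mk_take_succ f L hi, hbi, cond_true, hsrc, lift_mk_take_succ f L hj, hbj, cond_false,
      hs, inv_mul_cancel_right]
  · exact absurd (hL.eq_of_map_mk_take_eq hij hj.le hsrc).2 hj.ne

theorem IsShortestRelator.exists_card_le_card_cayleyEdges [DecidableEq G] {S : Finset G}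
    {L : List (S × Bool)} (hL : IsShortestRelator (lift ((↑) : S → G)) L) :
    ∃ R : Finset G, 1 ∈ R ∧ R.card ≤ (cayleyEdges S R).card := by
  set q : ℕ → G := fun i => lift ((↑) : S → G) (mk (L.take i))
  have hq0 : q 0 = 1 := by simp [q]
  set R := (Finset.range L.length).image q
  have hqR : ∀ i ≤ L.length, q i ∈ R := by
    intro i hi
    rcases hi.lt_or_eq with hi | rfl
    · exact Finset.mem_image_of_mem q (Finset.mem_range.2 hi)
    · have : q L.length = q 0 := by simp only [q, List.take_length, hL.2.2.1, hq0]
      rw [this]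
      exact Finset.mem_image_of_mem q (Finset.mem_range.2 (List.length_pos_iff.2 hL.2.1))
  have he : ∀ i, letterEdge ((↑) : S → G) L i ∈ cayleyEdges S R := by
    rintro ⟨i, hi⟩
    have hstep : q (i + 1) = _ := lift_mk_take_succ _ L hi
    rw [mem_cayleyEdges]
    rcases hb : L[i].2
    · have : q (i + 1) * L[i].1 = q i := by
        rw [hstep, hb, cond_false, inv_mul_cancel_right]
      simp only [letterEdge, Fin.getElem_fin, hb, cond_false]
      exact ⟨hqR _ hi, L[i].1.2, this ▸ hqR _ hi.le⟩
    · have : q i * L[i].1 = q (i + 1) := by rw [hstep, hb, cond_true]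
      simp only [letterEdge, Fin.getElem_fin, hb, cond_true]
      exact ⟨hqR _ hi.le, L[i].1.2, this ▸ hqR _ hi⟩
  refine ⟨R, hq0 ▸ hqR 0 (Nat.zero_le _), ?_⟩
  calc R.card ≤ L.length := Finset.card_image_le.trans (Finset.card_range _).le
    _ = (Finset.univ : Finset (Fin L.length)).card := (Finset.card_fin _).symm
    _ ≤ (cayleyEdges S R).card := Finset.card_le_card_of_injOn _ (fun i _ => he i)
      (hL.letterEdge_injective Subtype.val_injective).injOn

end FreeGroup

namespace Group

variable {G : Type*} [Group G] [ResiduallyFinite G] [DecidableEq G]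

theorem exists_finiteIndexNormalSubgroup_forall_notMem (F : Finset G) :
    ∃ N : FiniteIndexNormalSubgroup G, ∀ g ∈ F, g ≠ 1 → g ∉ N := by
  induction F using Finset.induction_on with
  | empty => exact ⟨.ofSubgroup ⊤, by simp⟩
  | insert a F _ ih =>
    obtain ⟨N, hN⟩ := ih
    by_cases ha : a = 1
    · exact ⟨N, by simpa [ha] using hN⟩
    obtain ⟨M, haM⟩ := exists_finiteIndexNormalSubgroup_notMem a ha
    refine ⟨N ⊓ M, fun g hg hg1 hgNM => ?_⟩
    rcases Finset.mem_insert.1 hg with rfl | hg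
    · exact haM hgNM.2
    · exact hN g hg hg1 hgNM.1

theorem exists_finiteIndexNormalSubgroup_injOn (R : Finset G) :
    ∃ N : FiniteIndexNormalSubgroup G, Set.InjOn (Quotient.mk (rightRel N.toSubgroup)) R := by
  obtain ⟨N, hN⟩ :=
    exists_finiteIndexNormalSubgroup_forall_notMem ((R ×ˢ R).image fun p => p.2 * p.1⁻¹)
  refine ⟨N, fun x hx y hy hxy => by_contra fun hne => ?_⟩
  rw [Quotient.eq, rightRel_apply] at hxy
  exact hN (y * x⁻¹)
    (Finset.mem_image_of_mem _ (Finset.mem_product (p := (x, y)).2 ⟨hx, hy⟩))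
    (mul_inv_eq_one.not.2 (Ne.symm hne)) hxy

end Group

/-- If a finitely generated residually finite group `G` is not free, then `rk - 1` fails
to be multiplicative: there is a normal subgroup `G₁` of finite index with
`rk(G₁) - 1 < [G : G₁] * (rk(G) - 1)`; in fact `G₁` can be generated by at most
`(rk(G) - 1) * [G : G₁]` elements. -/
theorem exists_finite_index_subgroup_rank_lt_of_not_free
    (G : Type*) [Group G] [Group.FG G]
    (hres : ∀ g : G, g ≠ 1 → ∃ N : Subgroup G, N.Normal ∧ N.FiniteIndex ∧ g ∉ N)
    (hnotfree : ¬ IsFreeGroup G) :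
    ∃ G₁ : Subgroup G, G₁.Normal ∧ G₁.FiniteIndex ∧
      (subgroupRank G₁ : ℤ) - 1 <
        (G₁.index : ℤ) * ((subgroupRank (⊤ : Subgroup G) : ℤ) - 1) ∧
      ∃ S : Finset G, S.card ≤ (subgroupRank (⊤ : Subgroup G) - 1) * G₁.index ∧
        Subgroup.closure (S : Set G) = G₁ := by
  classical
  obtain ⟨S, hScard, hS⟩ := exists_finset_card_eq_subgroupRank (Group.FG.out (G := G))
  have hsurj : Function.Surjective (FreeGroup.lift ((↑) : S → G)) := by
    rwa [FreeGroup.lift_surjective_iff_closure_range_eq_top, Subtype.range_coe]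
  obtain ⟨L, hL⟩ := FreeGroup.exists_isShortestRelator fun hinj =>
    hnotfree (.ofMulEquiv (MulEquiv.ofBijective _ ⟨hinj, hsurj⟩))
  obtain ⟨R, h1, hR⟩ := hL.exists_card_le_card_cayleyEdges
  have : Group.ResiduallyFinite G := Group.residuallyFinite_iff_exists_finiteIndex.mpr
    fun g hg => (hres g hg).imp fun _ hN => hN.2
  obtain ⟨N, hinj⟩ := Group.exists_finiteIndexNormalSubgroup_injOn R
  obtain ⟨T, hT, hTN⟩ :=
    N.toSubgroup.exists_finset_card_add_index_le_card_mul_index hS h1 hinj hR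
  have hrk : subgroupRank N.toSubgroup + N.toSubgroup.index ≤ S.card * N.toSubgroup.index :=
    (Nat.add_le_add_right (subgroupRank_le_card hTN) _).trans hT
  have hidx : 0 < N.toSubgroup.index := Nat.pos_of_ne_zero FiniteIndex.index_ne_zero
  refine ⟨N, inferInstance, inferInstance, ?_, T, ?_, hTN⟩
  · rw [← hScard]
    zify at hrk hidx
    linarith
  · rw [← hScard, Nat.sub_one_mul]
    omega
end
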